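/- arXiv:1212.6305 — 5 statements merged into one kernel-verified Lean document; each statement's English description precedes it below -/
import Mathlib

section
/- For every integer m ≥ 2, letting z = exp(3πi/(2m+1)), one has 𝒯_m(z) = 𝒯_{m+1}(z); moreover this common value equals sin(3mπ/(2m+1))/sin(3π/(2m+1)), which is a negative real number. -/
open Complex Real

/-- `𝒯_m(z) = z^{m-1} + z^{m-3} + ⋯ + z^{1-m}` for a natural number `m`. -/
noncomputable def calT (m : ℕ) (z : ℂ) : ℂ :=
  ∑ k ∈ Finset.range m, z ^ ((m : ℤ) - 1 - 2 * (k : ℤ))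

/-! Multiplying by `z - z⁻¹` telescopes `𝒯_n(z)` to `z ^ n - z ^ (-n)`, so on the unit circle
`𝒯_n(e^{iθ}) = sin (nθ) / sin θ`. For `θ = 3π/(2m+1)` the angles `mθ` and `(m+1)θ` add up to `3π`,
hence have the same sine, and `mθ` lies in `(π, 2π)` while `θ` lies in `(0, π)`. -/

theorem sub_inv_mul_calT {z : ℂ} (hz : z ≠ 0) (n : ℕ) :
    (z - z⁻¹) * calT n z = z ^ (n : ℤ) - z ^ (-(n : ℤ)) := by
  have step (k : ℕ) : (z - z⁻¹) * z ^ ((n : ℤ) - 1 - 2 * (k : ℤ)) =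
      z ^ ((n : ℤ) - 2 * (k : ℤ)) - z ^ ((n : ℤ) - 2 * ((k + 1 : ℕ) : ℤ)) := by
    rw [sub_mul, ← zpow_one_add₀ hz, ← zpow_neg_one, ← zpow_add₀ hz]
    congr 2
    · ring
    · push_cast; ring
  rw [calT, Finset.mul_sum, Finset.sum_congr rfl fun k _ => step k,
    Finset.sum_range_sub' (fun k : ℕ => z ^ ((n : ℤ) - 2 * (k : ℤ)))]
  congr 2
  ring

theorem exp_mul_I_zpow_sub_zpow_neg (θ : ℂ) (n : ℤ) :
    exp (θ * I) ^ n - exp (θ * I) ^ (-n) = 2 * sin (n * θ) * I := by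
  rw [← exp_int_mul, ← exp_int_mul, two_sin, mul_assoc, I_mul_I]
  push_cast
  ring_nf

theorem calT_exp_mul_I (n : ℕ) {θ : ℝ} (hθ : Real.sin θ ≠ 0) :
    calT n (exp (θ * I)) = ((Real.sin (n * θ) / Real.sin θ : ℝ) : ℂ) := by
  have key := sub_inv_mul_calT (exp_ne_zero (θ * I)) n
  have denom := exp_mul_I_zpow_sub_zpow_neg θ 1
  rw [zpow_one, zpow_neg_one, Int.cast_one, one_mul] at denom
  rw [denom, exp_mul_I_zpow_sub_zpow_neg, mul_comm, mul_assoc, mul_assoc] at key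
  have hθ' : sin (θ : ℂ) ≠ 0 := by exact_mod_cast hθ
  push_cast
  rw [eq_div_iff hθ']
  exact mul_left_cancel₀ (mul_ne_zero two_ne_zero I_ne_zero) (by linear_combination key)

theorem Real.sin_eq_sin_of_add_eq_three_pi {x y : ℝ} (h : x + y = 3 * π) : sin x = sin y := by
  rw [show x = π - y + 2 * π by linarith, sin_add_two_pi, sin_pi_sub]

theorem Real.sin_neg_of_pi_lt_of_lt_two_pi {x : ℝ} (h₁ : π < x) (h₂ : x < 2 * π) : sin x < 0 := by
  simpa [sin_sub_two_pi] using
    sin_neg_of_neg_of_neg_pi_lt (x := x - 2 * π) (by linarith) (by linarith)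

theorem calT_eq_at_exp_three_pi_div (m : ℕ) (hm : 2 ≤ m) :
    calT m (Complex.exp (3 * (Real.pi : ℂ) * Complex.I / (2 * (m : ℂ) + 1))) =
      calT (m + 1) (Complex.exp (3 * (Real.pi : ℂ) * Complex.I / (2 * (m : ℂ) + 1))) ∧
    calT m (Complex.exp (3 * (Real.pi : ℂ) * Complex.I / (2 * (m : ℂ) + 1))) =
      ((Real.sin (3 * (m : ℝ) * Real.pi / (2 * (m : ℝ) + 1)) /
        Real.sin (3 * Real.pi / (2 * (m : ℝ) + 1)) : ℝ) : ℂ) ∧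
    Real.sin (3 * (m : ℝ) * Real.pi / (2 * (m : ℝ) + 1)) /
        Real.sin (3 * Real.pi / (2 * (m : ℝ) + 1)) < 0 := by
  have hm' : (2 : ℝ) ≤ m := by exact_mod_cast hm
  have hden : (0 : ℝ) < 2 * m + 1 := by linarith
  set θ : ℝ := 3 * π / (2 * m + 1) with hθ
  have hz : 3 * (π : ℂ) * I / (2 * (m : ℂ) + 1) = θ * I := by rw [hθ]; push_cast; ring
  have hmθ : 3 * m * π / (2 * m + 1) = m * θ := by ring
  have hθ_pos : 0 < θ := by positivity
  have hθ_lt_pi : θ < π := by rw [div_lt_iff₀ hden]; nlinarith [pi_pos]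
  have hπ_lt_mθ : π < m * θ := by rw [← hmθ, lt_div_iff₀ hden]; nlinarith [pi_pos]
  have hmθ_lt_two_pi : m * θ < 2 * π := by rw [← hmθ, div_lt_iff₀ hden]; nlinarith [pi_pos]
  have hsin_succ : Real.sin ((m + 1 : ℕ) * θ) = Real.sin (m * θ) :=
    Real.sin_eq_sin_of_add_eq_three_pi (by rw [hθ]; push_cast; field_simp; ring)
  have hsinθ : 0 < Real.sin θ := sin_pos_of_pos_of_lt_pi hθ_pos hθ_lt_pi
  rw [hz, hmθ, calT_exp_mul_I m hsinθ.ne', calT_exp_mul_I (m + 1) hsinθ.ne', hsin_succ]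
  exact ⟨rfl, rfl, div_neg_of_neg_of_pos
    (Real.sin_neg_of_pi_lt_of_lt_two_pi hπ_lt_mθ hmθ_lt_two_pi) hsinθ⟩
end

section
/- For every integer n with n ≥ 1 or n ≤ −2, and every real s > 0, there exists a real number T with s + 2 < T < s + 2 + 4/s such that φ_n(s,T) = 0; consequently there exists a real t > 1 with t + 1/t = T satisfying Riley's equation for the n-twist knot. -/
/-- Auxiliary Chebyshev-like sequence: `tauAux k 0 = 0`, `tauAux k 1 = 1`,
`tauAux k (m+2) = k * tauAux k (m+1) - tauAux k m`. -/
def tauAux (k : ℝ) : ℕ → ℝ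
  | 0 => 0
  | 1 => 1
  | (m + 2) => k * tauAux k (m + 1) - tauAux k m

/-- The two-sided sequence `τ_m` (`m ∈ ℤ`) determined by `τ_0 = 0`, `τ_1 = 1` and
`τ_{m+1} = (s² - (T-2)s + 2) τ_m - τ_{m-1}`; it satisfies `τ_{-m} = -τ_m`. -/
def tauZ (s T : ℝ) (m : ℤ) : ℝ :=
  if 0 ≤ m then tauAux (s ^ 2 - (T - 2) * s + 2) m.toNat
  else -tauAux (s ^ 2 - (T - 2) * s + 2) (-m).toNat

/-- The Riley polynomial of the `n`-twist knot: `φ_n(s,T) = τ_{n+1} - (T - 1 - s) τ_n`. -/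
def rileyPhi (n : ℤ) (s T : ℝ) : ℝ :=
  tauZ s T (n + 1) - (T - 1 - s) * tauZ s T n


/-!
Put `s² - (T - 2)s + 2 = 2 cos θ`, i.e. `T = s + 2 + 4 sin²(θ/2) / s`. Then `τ_m sin θ = sin (mθ)`,
and the sum-to-product formulas turn `φ_n sin θ` into `2 sin(θ/2) h(θ)` with
`h(θ) = cos((2n+1)θ/2) - (2/s) sin(θ/2) sin(nθ)`. Since `h(0) = 1` and `h < 0` at `θ = 2π/|2n+1|`,
which lies in `(0, π)` because `|2n+1| ≥ 3`, the intermediate value theorem gives a root `θ` there,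
and `T ∈ (s + 2, s + 2 + 4/s)` for every `θ ∈ (0, π)`.
-/

open Real Set

-- `T` solved from `s² - (T - 2)s + 2 = 2 cos θ`, using `1 - cos θ = 2 sin²(θ/2)`.
noncomputable def traceOfAngle (s θ : ℝ) : ℝ :=
  s + 2 + 4 * sin (θ / 2) ^ 2 / s

noncomputable def rileyAngleFun (n : ℤ) (s θ : ℝ) : ℝ :=
  cos ((2 * n + 1) * θ / 2) - 2 / s * sin (θ / 2) * sin (n * θ)

lemma tauAux_two_mul_cos_mul_sin (θ : ℝ) (m : ℕ) :
    tauAux (2 * cos θ) m * sin θ = sin (m * θ) := by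
  induction m using Nat.twoStepInduction with
  | zero => simp [tauAux]
  | one => simp [tauAux]
  | more m ih₀ ih₁ =>
    have hprev : sin (m * θ) = sin ((m + 1 : ℕ) * θ - θ) := by push_cast; ring_nf
    have hnext : sin ((m + 2 : ℕ) * θ) = sin ((m + 1 : ℕ) * θ + θ) := by push_cast; ring_nf
    rw [tauAux, sub_mul, mul_assoc, ih₁, ih₀, hprev, hnext, sin_sub, sin_add]
    ring

lemma tauZ_mul_sin {s T θ : ℝ} (hk : s ^ 2 - (T - 2) * s + 2 = 2 * cos θ) (m : ℤ) :
    tauZ s T m * sin θ = sin (m * θ) := by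
  rw [tauZ, hk]
  split_ifs with hm
  · lift m to ℕ using hm
    simp [tauAux_two_mul_cos_mul_sin]
  · obtain ⟨k, rfl⟩ := Int.exists_eq_neg_ofNat (by omega : m ≤ 0)
    simp [tauAux_two_mul_cos_mul_sin, neg_mul, sin_neg]

lemma traceOfAngle_eq {s : ℝ} (hs : s ≠ 0) (θ : ℝ) :
    s ^ 2 - (traceOfAngle s θ - 2) * s + 2 = 2 * cos θ := by
  have hcos : cos θ = 1 - 2 * sin (θ / 2) ^ 2 := by rw [← cos_two_mul_eq_one_sub]; ring_nf
  rw [traceOfAngle, hcos]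
  field_simp
  ring

lemma traceOfAngle_mem_Ioo {s θ : ℝ} (hs : 0 < s) (hθ : θ ∈ Ioo 0 π) :
    traceOfAngle s θ ∈ Ioo (s + 2) (s + 2 + 4 / s) := by
  obtain ⟨hθ₀, hθπ⟩ := hθ
  have hsin : 0 < sin (θ / 2) := sin_pos_of_pos_of_lt_pi (by linarith) (by linarith)
  have hcos : 0 < cos (θ / 2) := cos_pos_of_mem_Ioo ⟨by linarith, by linarith⟩
  have hsin_sq : sin (θ / 2) ^ 2 < 1 := by nlinarith [sin_sq_add_cos_sq (θ / 2)]
  rw [traceOfAngle, mem_Ioo]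
  constructor
  · have : 0 < 4 * sin (θ / 2) ^ 2 / s := by positivity
    linarith
  · have : 4 * sin (θ / 2) ^ 2 / s < 4 / s := by gcongr; linarith
    linarith

lemma rileyPhi_traceOfAngle_mul_sin (n : ℤ) {s : ℝ} (hs : s ≠ 0) (θ : ℝ) :
    rileyPhi n s (traceOfAngle s θ) * sin θ = 2 * sin (θ / 2) * rileyAngleFun n s θ := by
  have hτ := tauZ_mul_sin (traceOfAngle_eq hs θ)
  have hT : traceOfAngle s θ - 1 - s = 1 + 4 * sin (θ / 2) ^ 2 / s := by
    rw [traceOfAngle]; ring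
  have hnext : ((n + 1 : ℤ) : ℝ) * θ = (2 * n + 1) * θ / 2 + θ / 2 := by push_cast; ring
  have hcur : (n : ℝ) * θ = (2 * n + 1) * θ / 2 - θ / 2 := by ring
  rw [rileyPhi, sub_mul, mul_assoc, hτ, hτ, hT, rileyAngleFun, hnext, hcur, sin_add, sin_sub]
  field_simp
  ring

lemma rileyAngleFun_zero (n : ℤ) (s : ℝ) : rileyAngleFun n s 0 = 1 := by
  simp [rileyAngleFun]

-- At this angle `cos((2n+1)θ/2) = cos π = -1`, hence `sin(nθ) = sin(θ/2)`.
lemma rileyAngleFun_two_pi_div_lt_zero (n : ℤ) {s : ℝ} (hs : 0 ≤ s) :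
    rileyAngleFun n s (2 * π / |(2 * n + 1 : ℝ)|) < 0 := by
  set c : ℝ := 2 * n + 1
  have hc : c ≠ 0 := by
    have : (2 * n + 1 : ℤ) ≠ 0 := by omega
    simp only [c]
    exact_mod_cast this
  set θ := 2 * π / |c|
  have hθ : 0 < θ := by positivity
  have hhalf : |c * θ / 2| = π := by
    rw [abs_div, abs_mul, abs_of_pos hθ, abs_two, mul_div_cancel₀ _ (abs_ne_zero.mpr hc)]
    ring
  have hcos : cos (c * θ / 2) = -1 := by rw [← cos_abs, hhalf, cos_pi]
  have hsin : sin (c * θ / 2) = 0 := by nlinarith [sin_sq_add_cos_sq (c * θ / 2)]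
  have hsin_n : sin (n * θ) = sin (θ / 2) := by
    rw [show (n : ℝ) * θ = c * θ / 2 - θ / 2 by simp only [c]; ring, sin_sub, hsin, hcos]
    ring
  rw [rileyAngleFun, hcos, hsin_n]
  have : 0 ≤ 2 / s * sin (θ / 2) * sin (θ / 2) := by
    rw [mul_assoc]; exact mul_nonneg (by positivity) (mul_self_nonneg _)
  linarith

lemma exists_rileyAngleFun_eq_zero (n : ℤ) {s : ℝ} (hs : 0 ≤ s) :
    ∃ θ ∈ Ioo 0 (2 * π / |(2 * n + 1 : ℝ)|), rileyAngleFun n s θ = 0 := by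
  have hcont : Continuous (rileyAngleFun n s) := by unfold rileyAngleFun; fun_prop
  refine intermediate_value_Ioo' (by positivity) hcont.continuousOn ⟨?_, ?_⟩
  · exact rileyAngleFun_two_pi_div_lt_zero n hs
  · rw [rileyAngleFun_zero]; exact one_pos

lemma exists_one_lt_add_one_div_eq {T : ℝ} (hT : 2 < T) : ∃ t : ℝ, 1 < t ∧ t + 1 / t = T := by
  have hd := sq_sqrt (show 0 ≤ T ^ 2 - 4 by nlinarith)
  have hd₀ := sqrt_nonneg (T ^ 2 - 4)
  refine ⟨(T + √(T ^ 2 - 4)) / 2, by linarith, ?_⟩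
  have : 0 < T + √(T ^ 2 - 4) := by linarith
  field_simp
  nlinarith

theorem riley_root_exists (n : ℤ) (hn : 1 ≤ n ∨ n ≤ -2) (s : ℝ) (hs : 0 < s) :
    ∃ T : ℝ, s + 2 < T ∧ T < s + 2 + 4 / s ∧ rileyPhi n s T = 0 ∧
      ∃ t : ℝ, 1 < t ∧ t + 1 / t = T := by
  obtain ⟨θ, ⟨hθ₀, hθ⟩, hroot⟩ := exists_rileyAngleFun_eq_zero n hs.le
  have hθπ : θ < π := by
    have hc : (2 : ℝ) < |(2 * n + 1 : ℝ)| := by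
      have : (2 : ℤ) < |2 * n + 1| := by rcases hn with h | h <;> rw [lt_abs] <;> omega
      exact_mod_cast this
    refine hθ.trans ?_
    rw [div_lt_iff₀ (by linarith)]
    nlinarith [pi_pos]
  obtain ⟨hT₀, hT₁⟩ := traceOfAngle_mem_Ioo hs ⟨hθ₀, hθπ⟩
  refine ⟨traceOfAngle s θ, hT₀, hT₁, ?_, exists_one_lt_add_one_div_eq (by linarith)⟩
  have hprod := rileyPhi_traceOfAngle_mul_sin n hs.ne' θ
  rw [hroot, mul_zero] at hprod
  exact (mul_eq_zero.mp hprod).resolve_right (sin_pos_of_pos_of_lt_pi hθ₀ hθπ).ne'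
end

section
/- Let n be an integer with n > 1 and set c = 2 − 2cos(π/(2n+1)) and c′ = 2 − 2cos(3π/(2n+1)), so that 0 < c < c′ < 4. Then for every real s > 0 there exists a real number T with s + 2 + c/s < T < s + 2 + c′/s such that φ_n(s,T) = 0. -/
/-!
On the curve `T = s + 2 + (2 - 2 cos θ)/s` the recursion coefficient of `τ` is `2 cos θ`, so
`τ_m = sin (m θ) / sin θ` and `sin θ · φ_n = sin ((n+1)θ) - (1 + (2 - 2 cos θ)/s) sin (n θ)`.
When `(2n+1)θ` is an odd multiple of `π` the two sines agree, leaving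
`sin θ · φ_n = -((2 - 2 cos θ)/s) sin (n θ)`. For `θ = π/(2n+1)` and `θ = 3π/(2n+1)` the angle
`n θ` lies in `(0, π)` and in `(π, 2π)` respectively, so `φ_n(s, ·)` changes sign between the two
corresponding values of `T`, and the intermediate value theorem gives the root.
-/

open Real

lemma sin_mul_tauAux_two_cos (θ : ℝ) : ∀ m : ℕ,
    sin θ * tauAux (2 * cos θ) m = sin (m * θ)
  | 0 => by simp [tauAux]
  | 1 => by simp [tauAux]
  | m + 2 => by
      have ih₁ := sin_mul_tauAux_two_cos θ (m + 1)
      have ih₀ := sin_mul_tauAux_two_cos θ m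
      have h₂ : sin ((m + 2 : ℕ) * θ) =
          sin ((m + 1 : ℕ) * θ) * cos θ + cos ((m + 1 : ℕ) * θ) * sin θ := by
        rw [← sin_add]; push_cast; ring_nf
      have h₀ : sin (m * θ) =
          sin ((m + 1 : ℕ) * θ) * cos θ - cos ((m + 1 : ℕ) * θ) * sin θ := by
        rw [← sin_sub]; push_cast; ring_nf
      rw [tauAux, h₂]
      linear_combination (2 * cos θ) * ih₁ - ih₀ - h₀

lemma continuous_tauAux (m : ℕ) : Continuous fun k : ℝ => tauAux k m := by
  induction m using Nat.twoStepInduction with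
  | zero => exact continuous_const
  | one => exact continuous_const
  | more m ih₀ ih₁ => exact (continuous_id.mul ih₁).sub ih₀

lemma continuous_tauZ (s : ℝ) (m : ℤ) : Continuous fun T => tauZ s T m := by
  have hk : Continuous fun T : ℝ => s ^ 2 - (T - 2) * s + 2 := by fun_prop
  unfold tauZ
  split_ifs
  · exact (continuous_tauAux _).comp hk
  · exact ((continuous_tauAux _).comp hk).neg

lemma continuous_rileyPhi (n : ℤ) (s : ℝ) : Continuous (rileyPhi n s) :=
  (continuous_tauZ s _).sub ((by fun_prop : Continuous fun T : ℝ => T - 1 - s).mul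
    (continuous_tauZ s n))

lemma tauZ_natCast (s T : ℝ) (m : ℕ) :
    tauZ s T m = tauAux (s ^ 2 - (T - 2) * s + 2) m := by
  simp [tauZ]

lemma rileyPhi_natCast (n : ℕ) (s T : ℝ) :
    rileyPhi n s T = tauAux (s ^ 2 - (T - 2) * s + 2) (n + 1)
      - (T - 1 - s) * tauAux (s ^ 2 - (T - 2) * s + 2) n := by
  rw [rileyPhi, ← tauZ_natCast, ← tauZ_natCast]
  push_cast
  rfl

lemma sin_mul_rileyPhi (n : ℕ) {s : ℝ} (hs : s ≠ 0) (θ : ℝ) :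
    sin θ * rileyPhi n s (s + 2 + (2 - 2 * cos θ) / s) =
      sin ((n + 1) * θ) - (1 + (2 - 2 * cos θ) / s) * sin (n * θ) := by
  have hk : s ^ 2 - (s + 2 + (2 - 2 * cos θ) / s - 2) * s + 2 = 2 * cos θ := by
    field_simp; ring
  have e₁ := sin_mul_tauAux_two_cos θ (n + 1)
  have e₀ := sin_mul_tauAux_two_cos θ n
  push_cast at e₁
  rw [rileyPhi_natCast, hk]
  linear_combination e₁ - (1 + (2 - 2 * cos θ) / s) * e₀

lemma sin_mul_rileyPhi_of_odd_multiple_pi (n j : ℕ) {s : ℝ} (hs : s ≠ 0) {θ : ℝ}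
    (hθ : (2 * n + 1) * θ = (2 * j + 1) * π) :
    sin θ * rileyPhi n s (s + 2 + (2 - 2 * cos θ) / s) =
      -((2 - 2 * cos θ) / s) * sin (n * θ) := by
  have h : sin ((n + 1) * θ) = sin (n * θ) := by
    have := sin_nat_mul_pi_sub (n * θ) (2 * j + 1)
    rw [pow_succ, pow_mul] at this
    push_cast at this
    rw [show (n + 1) * θ = (2 * j + 1) * π - n * θ by linarith, this]
    norm_num
  rw [sin_mul_rileyPhi n hs, h]
  ring

lemma two_sub_two_cos_lt {a b : ℝ} (ha : 0 ≤ a) (hab : a < b) (hb : b ≤ π) :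
    2 - 2 * cos a < 2 - 2 * cos b := by
  linarith [cos_lt_cos_of_nonneg_of_le_pi ha hb hab]

lemma rileyPhi_mul_sin_neg (n j : ℕ) {s : ℝ} (hs : 0 < s) {θ : ℝ} (hθ₀ : 0 < θ)
    (hθπ : θ < π) (hθ : (2 * n + 1) * θ = (2 * j + 1) * π) (hsin : sin (n * θ) ≠ 0) :
    rileyPhi n s (s + 2 + (2 - 2 * cos θ) / s) * sin (n * θ) < 0 := by
  have hc : 0 < (2 - 2 * cos θ) / s :=
    div_pos (by linarith [two_sub_two_cos_lt le_rfl hθ₀ hθπ.le, cos_zero]) hs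
  have h : sin θ * (rileyPhi n s (s + 2 + (2 - 2 * cos θ) / s) * sin (n * θ)) < 0 := by
    rw [← mul_assoc, sin_mul_rileyPhi_of_odd_multiple_pi n j hs.ne' hθ, mul_assoc, ← sq]
    exact mul_neg_of_neg_of_pos (neg_lt_zero.2 hc) (sq_pos_of_ne_zero hsin)
  exact neg_of_mul_neg_right h (sin_pos_of_pos_of_lt_pi hθ₀ hθπ).le

lemma sin_nat_mul_pi_div_pos {n : ℕ} (hn : 0 < n) : 0 < sin (n * (π / (2 * n + 1))) := by
  have hd : (0 : ℝ) < 2 * n + 1 := by positivity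
  refine sin_pos_of_pos_of_lt_pi (by positivity) ?_
  rw [mul_div_assoc', div_lt_iff₀ hd]
  nlinarith [pi_pos]

lemma sin_nat_mul_three_pi_div_neg {n : ℕ} (hn : 1 < n) :
    sin (n * (3 * π / (2 * n + 1))) < 0 := by
  have hd : (0 : ℝ) < 2 * n + 1 := by positivity
  have hn' : (2 : ℝ) ≤ n := by exact_mod_cast hn
  rw [← sin_sub_two_pi]
  refine sin_neg_of_neg_of_neg_pi_lt ?_ ?_
  · rw [sub_neg, mul_div_assoc', div_lt_iff₀ hd]; nlinarith [pi_pos]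
  · rw [lt_sub_iff_add_lt, mul_div_assoc', lt_div_iff₀ hd]; nlinarith [pi_pos]

theorem riley_root_exists_pos_twist (n : ℤ) (hn : 1 < n) :
    0 < 2 - 2 * Real.cos (Real.pi / (2 * (n : ℝ) + 1)) ∧
    2 - 2 * Real.cos (Real.pi / (2 * (n : ℝ) + 1)) <
      2 - 2 * Real.cos (3 * Real.pi / (2 * (n : ℝ) + 1)) ∧
    2 - 2 * Real.cos (3 * Real.pi / (2 * (n : ℝ) + 1)) < 4 ∧
    ∀ s : ℝ, 0 < s → ∃ T : ℝ,
      s + 2 + (2 - 2 * Real.cos (Real.pi / (2 * (n : ℝ) + 1))) / s < T ∧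
      T < s + 2 + (2 - 2 * Real.cos (3 * Real.pi / (2 * (n : ℝ) + 1))) / s ∧
      rileyPhi n s T = 0 := by
  lift n to ℕ using by omega
  have hn' : (2 : ℝ) ≤ n := by exact_mod_cast hn
  push_cast
  have hd : (0 : ℝ) < 2 * n + 1 := by positivity
  set θ₁ := π / (2 * n + 1) with hθ₁
  set θ₂ := 3 * π / (2 * n + 1) with hθ₂
  have hθ₁₀ : 0 < θ₁ := by positivity
  have hθ₁₂ : θ₁ < θ₂ := by rw [hθ₁, hθ₂]; gcongr; linarith [pi_pos]
  have hθ₂π : θ₂ < π := by rw [hθ₂, div_lt_iff₀ hd]; nlinarith [pi_pos]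
  have hc₁₂ := two_sub_two_cos_lt hθ₁₀.le hθ₁₂ hθ₂π.le
  refine ⟨by linarith [two_sub_two_cos_lt le_rfl hθ₁₀ (hθ₁₂.trans hθ₂π).le, cos_zero], hc₁₂,
    by linarith [two_sub_two_cos_lt (hθ₁₀.trans hθ₁₂).le hθ₂π le_rfl, cos_pi], fun s hs => ?_⟩
  have hφ₁ : rileyPhi n s (s + 2 + (2 - 2 * cos θ₁) / s) < 0 := by
    have hsin : 0 < sin (n * θ₁) := sin_nat_mul_pi_div_pos (by omega)
    exact neg_of_mul_neg_left (rileyPhi_mul_sin_neg n 0 hs hθ₁₀ (hθ₁₂.trans hθ₂π)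
      (by rw [hθ₁]; field_simp; ring) hsin.ne') hsin.le
  have hφ₂ : 0 < rileyPhi n s (s + 2 + (2 - 2 * cos θ₂) / s) := by
    have hsin : sin (n * θ₂) < 0 := sin_nat_mul_three_pi_div_neg (by exact_mod_cast hn)
    exact pos_of_mul_neg_left (rileyPhi_mul_sin_neg n 1 hs (hθ₁₀.trans hθ₁₂) hθ₂π
      (by rw [hθ₂]; field_simp; ring) hsin.ne) hsin.le
  have hT₁₂ : s + 2 + (2 - 2 * cos θ₁) / s ≤ s + 2 + (2 - 2 * cos θ₂) / s := by gcongr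
  obtain ⟨T, ⟨hT₁, hT₂⟩, hφT⟩ :=
    intermediate_value_Ioo hT₁₂ (continuous_rileyPhi n s).continuousOn ⟨hφ₁, hφ₂⟩
  exact ⟨T, hT₁, hT₂, hφT⟩
end

section
/- For n = −2, for every real s > 0 there exists a real number T with s + 2 + 1/s < T < s + 2 + 2/s such that φ_{−2}(s,T) = 0, i.e., (T − 1 − s)(s² − (T−2)s + 2) = 1; indeed, Φ(T) = −1 + (T−1−s)(s² − (T−2)s + 2) satisfies Φ(s+2+1/s) = 1/s > 0 and Φ(s+2+2/s) = −1 < 0. -/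
/-! Along `T = s + 2 + c / s` the second factor of `φ_{-2}` collapses to `2 - c`, so
`φ_{-2}` is `1 / s > 0` at `c = 1` and `-1 < 0` at `c = 2`; the intermediate value theorem
gives a root in between. -/

lemma tauZ_neg_one (s T : ℝ) : tauZ s T (-1) = -1 := by
  simp [tauZ, tauAux]

lemma tauZ_neg_two (s T : ℝ) : tauZ s T (-2) = -(s ^ 2 - (T - 2) * s + 2) := by
  simp [tauZ, tauAux, show Int.toNat 2 = 2 from rfl]

lemma rileyPhi_neg_two (s T : ℝ) :
    rileyPhi (-2) s T = -1 + (T - 1 - s) * (s ^ 2 - (T - 2) * s + 2) := by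
  rw [rileyPhi, show (-2 : ℤ) + 1 = -1 by norm_num, tauZ_neg_one, tauZ_neg_two]
  ring

lemma rileyPhi_neg_two_poly_at_shift {s : ℝ} (hs : s ≠ 0) (c : ℝ) :
    -1 + ((s + 2 + c / s) - 1 - s) * (s ^ 2 - ((s + 2 + c / s) - 2) * s + 2) =
      (1 + c / s) * (2 - c) - 1 := by
  field_simp
  ring

lemma exists_rileyPhi_neg_two_poly_eq_zero {s : ℝ} (hs : 0 < s) :
    ∃ T ∈ Set.Ioo (s + 2 + 1 / s) (s + 2 + 2 / s),
      -1 + (T - 1 - s) * (s ^ 2 - (T - 2) * s + 2) = 0 := by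
  have hle : s + 2 + 1 / s ≤ s + 2 + 2 / s := by gcongr; norm_num
  have hsign : (0 : ℝ) ∈ Set.Ioo ((1 + 2 / s) * (2 - 2) - 1) ((1 + 1 / s) * (2 - 1) - 1) := by
    constructor <;> norm_num [hs]
  rw [← rileyPhi_neg_two_poly_at_shift hs.ne', ← rileyPhi_neg_two_poly_at_shift hs.ne'] at hsign
  exact intermediate_value_Ioo' hle (by fun_prop) hsign

theorem riley_root_exists_neg_two (s : ℝ) (hs : 0 < s) :
    (∃ T : ℝ, s + 2 + 1 / s < T ∧ T < s + 2 + 2 / s ∧ rileyPhi (-2) s T = 0 ∧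
      (T - 1 - s) * (s ^ 2 - (T - 2) * s + 2) = 1) ∧
    -1 + ((s + 2 + 1 / s) - 1 - s) * (s ^ 2 - ((s + 2 + 1 / s) - 2) * s + 2) = 1 / s ∧
    0 < 1 / s ∧
    -1 + ((s + 2 + 2 / s) - 1 - s) * (s ^ 2 - ((s + 2 + 2 / s) - 2) * s + 2) = -1 := by
  obtain ⟨T, ⟨hlo, hhi⟩, hroot⟩ := exists_rileyPhi_neg_two_poly_eq_zero hs
  refine ⟨⟨T, hlo, hhi, by rwa [rileyPhi_neg_two], by linarith⟩, ?_, by positivity, ?_⟩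
  · rw [rileyPhi_neg_two_poly_at_shift hs.ne']
    ring
  · rw [rileyPhi_neg_two_poly_at_shift hs.ne']
    ring
end

section
/- Let c > 0 be a constant and let t : (0,∞) → (1,∞) be a continuous function such that s + 2 + c/s < t(s) + 1/t(s) < s + 2 + 4/s for all s > 0. Define B(s) = (t(s) − s − 1)/(−1 + (1 + s)t(s)) (which is positive) and g(s) = −log B(s) / log √(t(s)). Then g(s) → 0 as s → 0⁺, g(s) → 4 as s → ∞, and consequently the image of g contains the open interval (0, 4). -/
/-!
As `s → 0⁺` the lower bound forces `t s ≥ c / s → ∞`, so `B s → 1`: the numerator of `g` tends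
to `0` while `log √(t s) → ∞`, hence `g → 0`. As `s → ∞` the two bounds squeeze `t s - s → 2`,
so `B s * t s ^ 2 → 1`, i.e. `-log (B s) = 2 log (t s) + o(1) = 4 log √(t s) + o(1)`, hence
`g → 4`. The intermediate value theorem on `(0, ∞)` then covers `(0, 4)`.
-/

open Filter Topology Real Set

theorem Ioo_subset_image_Ioi_of_tendsto {α δ : Type*} [ConditionallyCompleteLinearOrder α]
    [TopologicalSpace α] [OrderTopology α] [DenselyOrdered α] [NoMaxOrder α]
    [LinearOrder δ] [TopologicalSpace δ] [OrderClosedTopology δ]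
    {f : α → δ} {x₀ : α} {a b : δ} (hf : ContinuousOn f (Ioi x₀))
    (ha : Tendsto f (𝓝[>] x₀) (𝓝 a)) (hb : Tendsto f atTop (𝓝 b)) :
    Ioo a b ⊆ f '' Ioi x₀ := by
  rintro y ⟨hay, hyb⟩
  obtain ⟨x₁, hx₁y, hx₁⟩ :=
    ((ha.eventually (eventually_lt_nhds hay)).and self_mem_nhdsWithin).exists
  obtain ⟨x₂, hyx₂, hx₁₂⟩ :=
    ((hb.eventually (eventually_gt_nhds hyb)).and (eventually_gt_atTop x₁)).exists
  have hsub : Icc x₁ x₂ ⊆ Ioi x₀ := (Icc_subset_Ioi_iff hx₁₂.le).mpr hx₁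
  obtain ⟨x, hx, rfl⟩ := intermediate_value_Icc hx₁₂.le (hf.mono hsub) ⟨hx₁y.le, hyx₂.le⟩
  exact ⟨x, hsub hx, rfl⟩

section

variable {α : Type*} {l : Filter α}

theorem tendsto_neg_log_div_log_sqrt {B u : α → ℝ} (k : ℕ) (hu : Tendsto u l atTop)
    (hB : Tendsto (fun x => B x * u x ^ k) l (𝓝 1)) :
    Tendsto (fun x => -log (B x) / log √(u x)) l (𝓝 (2 * k)) := by
  have hlog : Tendsto (fun x => log (B x * u x ^ k)) l (𝓝 0) := by
    simpa using hB.log one_ne_zero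
  have hlim := (tendsto_const_nhds (x := (2 * k : ℝ))).sub
    ((hlog.div_atTop (tendsto_log_atTop.comp hu)).const_mul 2)
  rw [mul_zero, sub_zero] at hlim
  refine hlim.congr' ?_
  filter_upwards [hu.eventually_gt_atTop 1, hB.eventually (lt_mem_nhds zero_lt_one)]
    with x hux hBux
  have hBx : 0 < B x := pos_of_mul_pos_left hBux (by positivity)
  have hlogu : 0 < log (u x) := log_pos hux
  rw [Function.comp_apply, log_sqrt (by positivity), log_mul hBx.ne' (by positivity), log_pow]
  field_simp
  ring

theorem ContinuousOn.neg_log_div_log_sqrt [TopologicalSpace α] {B u : α → ℝ} {S : Set α}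
    (hB : ContinuousOn B S) (hu : ContinuousOn u S) (hBpos : ∀ x ∈ S, 0 < B x)
    (hu1 : ∀ x ∈ S, 1 < u x) :
    ContinuousOn (fun x => -Real.log (B x) / Real.log √(u x)) S := by
  have hsqrt (x : α) (hx : x ∈ S) : 1 < √(u x) := by
    rw [lt_sqrt zero_le_one, one_pow]
    exact hu1 x hx
  exact ((hB.log fun x hx => (hBpos x hx).ne').neg).div (hu.sqrt.log fun x hx =>
    (zero_lt_one.trans (hsqrt x hx)).ne') fun x hx => (log_pos (hsqrt x hx)).ne'

/-- The paper's `B`: the `(1,1)`-entry of the Riley image of the longitude when that of the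
meridian is `√u`. -/
noncomputable def longitudeEntry (s u : ℝ) : ℝ := (u - s - 1) / (-1 + (1 + s) * u)

variable {s u : α → ℝ}

theorem tendsto_longitudeEntry_nhds_one (hs : Tendsto s l (𝓝 0)) (hu : Tendsto u l atTop) :
    Tendsto (fun x => longitudeEntry (s x) (u x)) l (𝓝 1) := by
  have hinv := hu.inv_tendsto_atTop
  have hnum : Tendsto (fun x => 1 - (s x + 1) * (u x)⁻¹) l (𝓝 1) := by
    simpa using tendsto_const_nhds.sub ((hs.add_const 1).mul hinv)
  have hden : Tendsto (fun x => 1 + s x - (u x)⁻¹) l (𝓝 1) := by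
    simpa using (hs.const_add 1).sub hinv
  have hquot := hnum.div hden one_ne_zero
  rw [div_one] at hquot
  refine hquot.congr' ?_
  filter_upwards [hu.eventually_gt_atTop 0] with x hx
  rw [Pi.div_apply, longitudeEntry, ← div_div_div_cancel_right₀ hx.ne' (u x - s x - 1)]
  congr 1 <;> field_simp <;> ring

theorem tendsto_longitudeEntry_mul_sq_nhds_one (hu : Tendsto u l atTop)
    (hus : Tendsto (fun x => u x - s x) l (𝓝 2)) :
    Tendsto (fun x => longitudeEntry (s x) (u x) * u x ^ 2) l (𝓝 1) := by
  have hinv := hu.inv_tendsto_atTop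
  have hnum : Tendsto (fun x => u x - s x - 1) l (𝓝 1) := by
    convert hus.sub_const 1
    norm_num
  have hden : Tendsto (fun x => 1 + (1 - (u x - s x)) * (u x)⁻¹ - (u x)⁻¹ ^ 2) l (𝓝 1) := by
    simpa using (((tendsto_const_nhds.sub hus).mul hinv).const_add 1).sub (hinv.pow 2)
  have hquot := hnum.div hden one_ne_zero
  rw [div_one] at hquot
  refine hquot.congr' ?_
  filter_upwards [hu.eventually_gt_atTop 0] with x hx
  have hden_eq : 1 + (1 - (u x - s x)) * (u x)⁻¹ - (u x)⁻¹ ^ 2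
      = (-1 + (1 + s x) * u x) / u x ^ 2 := by
    field_simp
    ring
  rw [Pi.div_apply, hden_eq, div_div_eq_mul_div, mul_div_right_comm, longitudeEntry]

end

theorem lt_sub_sub_one_of_lt_add_inv {c s u : ℝ} (hu : 1 < u)
    (h : s + 2 + c / s < u + 1 / u) : c / s < u - s - 1 := by
  have : 1 / u < 1 := (div_lt_one (by positivity)).mpr hu
  linarith

theorem tendsto_sub_id_nhds_two {c : ℝ} {t : ℝ → ℝ} (htop : Tendsto t atTop atTop)
    (hlow : ∀ s : ℝ, 0 < s → s + 2 + c / s < t s + 1 / t s)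
    (hhigh : ∀ s : ℝ, 0 < s → t s + 1 / t s < s + 2 + 4 / s) :
    Tendsto (fun s => t s - s) atTop (𝓝 2) := by
  have hlower : Tendsto (fun s : ℝ => 2 + c / s - 1 / t s) atTop (𝓝 2) := by
    simpa using ((tendsto_const_nhds.div_atTop tendsto_id).const_add (2 : ℝ)).sub
      ((tendsto_const_nhds (x := (1 : ℝ))).div_atTop htop)
  have hupper : Tendsto (fun s : ℝ => 2 + 4 / s) atTop (𝓝 2) := by
    simpa using (tendsto_const_nhds.div_atTop tendsto_id).const_add (2 : ℝ)
  refine tendsto_of_tendsto_of_tendsto_of_le_of_le' hlower hupper ?_ ?_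
  · filter_upwards [eventually_gt_atTop 0] with s hs
    linarith [hlow s hs]
  · filter_upwards [eventually_gt_atTop 0, htop.eventually_gt_atTop 0] with s hs hts
    have : 0 < 1 / t s := by positivity
    linarith [hhigh s hs]

theorem g_image_contains_Ioo (c : ℝ) (hc : 0 < c) (t : ℝ → ℝ)
    (htcont : ContinuousOn t (Set.Ioi 0))
    (ht : ∀ s : ℝ, 0 < s → 1 < t s)
    (hlow : ∀ s : ℝ, 0 < s → s + 2 + c / s < t s + 1 / t s)
    (hhigh : ∀ s : ℝ, 0 < s → t s + 1 / t s < s + 2 + 4 / s)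
    (B g : ℝ → ℝ)
    (hB : ∀ s : ℝ, B s = (t s - s - 1) / (-1 + (1 + s) * t s))
    (hg : ∀ s : ℝ, g s = -Real.log (B s) / Real.log (Real.sqrt (t s))) :
    (∀ s : ℝ, 0 < s → 0 < B s) ∧
    Tendsto g (nhdsWithin 0 (Set.Ioi 0)) (nhds 0) ∧
    Tendsto g atTop (nhds 4) ∧
    Set.Ioo (0 : ℝ) 4 ⊆ g '' Set.Ioi 0 := by
  have hnum (s : ℝ) (hs : 0 < s) : c / s < t s - s - 1 :=
    lt_sub_sub_one_of_lt_add_inv (ht s hs) (hlow s hs)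
  have hden (s : ℝ) (hs : 0 < s) : 0 < -1 + (1 + s) * t s := by
    nlinarith [ht s hs]
  have hBpos (s : ℝ) (hs : 0 < s) : 0 < B s := by
    rw [hB]
    exact div_pos (by linarith [hnum s hs, div_pos hc hs]) (hden s hs)
  have ht0 : Tendsto t (𝓝[>] 0) atTop := by
    refine tendsto_atTop_mono' _ ?_ (tendsto_inv_nhdsGT_zero.const_mul_atTop hc)
    filter_upwards [self_mem_nhdsWithin] with s (hs : 0 < s)
    linarith [hnum s hs, div_eq_mul_inv c s]
  have htop : Tendsto t atTop atTop := by
    refine tendsto_atTop_mono' _ ?_ tendsto_id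
    filter_upwards [eventually_gt_atTop 0] with s hs
    exact (by linarith [hnum s hs, div_pos hc hs] : s ≤ t s)
  have hBeq : B = fun s => longitudeEntry s (t s) := funext hB
  have hgeq : g = _ := funext hg
  have hg0 : Tendsto g (𝓝[>] 0) (𝓝 0) := by
    rw [hgeq, hBeq]
    simpa using tendsto_neg_log_div_log_sqrt 0 ht0 <| by
      simpa using tendsto_longitudeEntry_nhds_one (tendsto_id.mono_left nhdsWithin_le_nhds) ht0
  have hg4 : Tendsto g atTop (𝓝 4) := by
    rw [hgeq, hBeq]
    convert tendsto_neg_log_div_log_sqrt 2 htop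
      (tendsto_longitudeEntry_mul_sq_nhds_one htop (tendsto_sub_id_nhds_two htop hlow hhigh))
    norm_num
  have hgcont : ContinuousOn g (Ioi 0) := by
    have hBcont : ContinuousOn B (Ioi 0) := by
      rw [hBeq]
      exact ContinuousOn.div (by fun_prop) (by fun_prop) fun s hs => (hden s hs).ne'
    rw [hgeq]
    exact hBcont.neg_log_div_log_sqrt htcont hBpos ht
  exact ⟨hBpos, hg0, hg4, Ioo_subset_image_Ioi_of_tendsto hgcont hg0 hg4⟩
end
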